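/- (Proposition 1.) Let H^{(L)} be a Hamiltonian on L qubits, let L' ≤ L, j ∈ Λ, and set U^{(L)} = exp(−i H^{(L)} τ) and U^{(L',j)} = exp(−i H^{(L',j)} τ) ⊗ I_{Λ∖Λ_{L',j}} for a fixed τ ≥ 0. Suppose that for each Pauli operator O ∈ {X,Y,Z} acting on qubit j (tensored with the identity elsewhere), ‖U^{(L)†} O_j U^{(L)} − U^{(L',j)†} O_j U^{(L',j)}‖ ≤ ε_LR. Then for every L-qubit unitary V^{(L)}, C_LHST^{(j)}(U^{(L)}, V^{(L)}) ≤ C_LHST^{(j)}(U^{(L',j)}, V^{(L)}) + (3/4) ε_LR. -/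

import Mathlib

open scoped Kronecker Matrix

namespace LVQC

/-- The space of operators on qubits indexed by `ι`. -/
abbrev Op (ι : Type*) := Matrix (ι → Fin 2) (ι → Fin 2) ℂ

/-- Two-qubit gates. -/
abbrev G2 := Matrix (Fin 2 × Fin 2) (Fin 2 × Fin 2) ℂ

variable {ι : Type*} [Fintype ι] [DecidableEq ι]

/-- The operator norm (spectral norm) of a matrix. -/
noncomputable def opNorm {n : Type*} [Fintype n] [DecidableEq n] (M : Matrix n n ℂ) : ℝ :=
  ‖Matrix.toEuclideanCLM (𝕜 := ℂ) M‖

/-- The Bell state `|Φ+⟩_AB` on the doubled system. -/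
noncomputable def bell (ι : Type*) [Fintype ι] [DecidableEq ι] :
    (ι → Fin 2) × (ι → Fin 2) → ℂ :=
  fun p => if p.1 = p.2 then ((Real.sqrt (2 ^ Fintype.card ι) : ℝ) : ℂ)⁻¹ else 0

/-- Projector onto the full Bell state, `|Φ+⟩⟨Φ+|_AB`. -/
noncomputable def bellProj (ι : Type*) [Fintype ι] [DecidableEq ι] :
    Matrix ((ι → Fin 2) × (ι → Fin 2)) ((ι → Fin 2) × (ι → Fin 2)) ℂ :=
  Matrix.of fun p q => bell ι p * star (bell ι q)

/-- Projector `Π_j` onto the Bell pair at site `j`, tensored with the identity elsewhere. -/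
noncomputable def PiProj (j : ι) :
    Matrix ((ι → Fin 2) × (ι → Fin 2)) ((ι → Fin 2) × (ι → Fin 2)) ℂ :=
  Matrix.of fun p q =>
    if p.1 j = p.2 j ∧ q.1 j = q.2 j ∧ ∀ k, k ≠ j → p.1 k = q.1 k ∧ p.2 k = q.2 k
    then (2 : ℂ)⁻¹ else 0

/-- Entrywise complex conjugate `V*`. -/
noncomputable def conjMat (V : Op ι) : Op ι := V.map (starRingEnd ℂ)

/-- The state `ρ_AB(U,V) = (U_A ⊗ V*_B)|Φ+⟩⟨Φ+|(U_A ⊗ V*_B)†`. -/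
noncomputable def rho (U V : Op ι) :
    Matrix ((ι → Fin 2) × (ι → Fin 2)) ((ι → Fin 2) × (ι → Fin 2)) ℂ :=
  (U ⊗ₖ conjMat V) * bellProj ι * (U ⊗ₖ conjMat V)ᴴ

/-- Local cost function `C_LHST^{(j)}(U,V) = 1 - Tr[Π_j ρ_AB(U,V)]`. -/
noncomputable def CLHSTj (j : ι) (U V : Op ι) : ℝ :=
  1 - ((PiProj j * rho U V).trace).re

/-- Averaged local cost function `C_LHST(U,V)`. -/
noncomputable def CLHST (U V : Op ι) : ℝ :=
  (Fintype.card ι : ℝ)⁻¹ * ∑ j, CLHSTj j U V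

/-- Global cost function `C_HST(U,V) = 1 - |Tr(U†V)|²/4^L`. -/
noncomputable def CHST (U V : Op ι) : ℝ :=
  1 - ‖(Uᴴ * V).trace‖ ^ 2 / 4 ^ Fintype.card ι

/-- Single-qubit operator `O` placed at site `j`, tensored with the identity elsewhere. -/
noncomputable def embedAt (j : ι) (O : Matrix (Fin 2) (Fin 2) ℂ) : Op ι :=
  Matrix.of fun a b => O (a j) (b j) * (if ∀ k, k ≠ j → a k = b k then 1 else 0)

/-- Pauli X. -/
def pX : Matrix (Fin 2) (Fin 2) ℂ := !![0, 1; 1, 0]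
/-- Pauli Y. -/
def pY : Matrix (Fin 2) (Fin 2) ℂ := !![0, -Complex.I; Complex.I, 0]
/-- Pauli Z. -/
def pZ : Matrix (Fin 2) (Fin 2) ℂ := !![1, 0; 0, -1]

/-- Operator on the qubits in `S`, tensored with the identity on the rest. -/
noncomputable def embedSub (S : Finset ι) (N : Op ↥S) : Op ι :=
  Matrix.of fun a b =>
    N (fun k => a k.1) (fun k => b k.1) * (if ∀ k ∉ S, a k = b k then 1 else 0)

/-- `M` acts nontrivially only on the qubits in `S`. -/
def ActsOn (M : Op ι) (S : Finset ι) : Prop := ∃ N : Op ↥S, M = embedSub S N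

/-- Compression of an operator to the qubits in `S` (left inverse of `embedSub`). -/
noncomputable def compress (S : Finset ι) (M : Op ι) : Op ↥S :=
  Matrix.of fun a b =>
    M (fun k => if h : k ∈ S then a ⟨k, h⟩ else 0) (fun k => if h : k ∈ S then b ⟨k, h⟩ else 0)

/-- Time evolution `exp(-i H τ)`. -/
noncomputable def timeEvol (τ : ℝ) (H : Op ι) : Op ι :=
  NormedSpace.exp ((-(Complex.I * (τ : ℂ))) • H)

/-- Heisenberg evolution `e^{iHτ} O e^{-iHτ}`. -/
noncomputable def heis (τ : ℝ) (H O : Op ι) : Op ι :=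
  NormedSpace.exp ((Complex.I * (τ : ℂ)) • H) * O * timeEvol τ H

/-- Two-qubit gate `G` placed at sites `p`, `q`, tensored with the identity elsewhere. -/
noncomputable def embedPair (p q : ι) (G : G2) : Op ι :=
  Matrix.of fun a b =>
    G (a p, a q) (b p, b q) * (if ∀ k, k ≠ p → k ≠ q → a k = b k then 1 else 0)

/-- The domain `Λ_{L',j} = {j' : |j - j'| ≤ L'/2}` (linear distance, open boundary). -/
def LambdaF (L : ℕ) (L' : ℕ) (j : Fin L) : Finset (Fin L) :=
  Finset.univ.filter fun j' => 2 * ((j : ℤ) - (j' : ℤ)).natAbs ≤ L'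

/-- Gate `G` at positions `(p, p+1)` on `M` qubits (identity if out of range). -/
noncomputable def gateFull (M : ℕ) (p : ℕ) (G : G2) : Op (Fin M) :=
  if h : p + 1 < M then embedPair (⟨p, Nat.lt_of_succ_lt h⟩ : Fin M) ⟨p + 1, h⟩ G else 1

/-- Sublayer of gates on the (0-indexed) pairs `(2k, 2k+1)`. -/
noncomputable def sublayerA (M : ℕ) (g : ℕ → G2) : Op (Fin M) :=
  ((List.range (M / 2)).map fun k => gateFull M (2 * k) (g k)).prod

/-- Sublayer of gates on the (0-indexed) pairs `(2k+1, 2k+2)`. -/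
noncomputable def sublayerB (M : ℕ) (g : ℕ → G2) : Op (Fin M) :=
  ((List.range ((M - 1) / 2)).map fun k => gateFull M (2 * k + 1) (g k)).prod

/-- Depth-`d` brickwork circuit on `M` qubits: the `i`-th layer applies first the gates
`gA i k` on pairs `(2k,2k+1)` (the paper's 1-indexed `(2k-1,2k)`), then the gates `gB i k`
on pairs `(2k+1,2k+2)` (the paper's `(2k,2k+1)`). -/
noncomputable def brickFull (M d : ℕ) (gA gB : ℕ → ℕ → G2) : Op (Fin M) :=
  ((List.range d).map fun i => sublayerB M (gB i) * sublayerA M (gA i)).prod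

/-- Gate at positions `(p, p+1)` restricted to the subsystem `S`: kept exactly when its
support is contained in `S` (identity otherwise). -/
noncomputable def gateSub {L : ℕ} (S : Finset (Fin L)) (p : ℕ) (G : G2) : Op ↥S :=
  if h : p + 1 < L then
    if h2 : (⟨p, Nat.lt_of_succ_lt h⟩ : Fin L) ∈ S ∧ (⟨p + 1, h⟩ : Fin L) ∈ S then
      embedPair (⟨⟨p, Nat.lt_of_succ_lt h⟩, h2.1⟩ : ↥S) ⟨⟨p + 1, h⟩, h2.2⟩ G
    else 1
  else 1

/-- Sublayer of the restricted ansatz on pairs `(2k,2k+1)`. -/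
noncomputable def sublayerASub {L : ℕ} (S : Finset (Fin L)) (g : ℕ → G2) : Op ↥S :=
  ((List.range (L / 2)).map fun k => gateSub S (2 * k) (g k)).prod

/-- Sublayer of the restricted ansatz on pairs `(2k+1,2k+2)`. -/
noncomputable def sublayerBSub {L : ℕ} (S : Finset (Fin L)) (g : ℕ → G2) : Op ↥S :=
  ((List.range ((L - 1) / 2)).map fun k => gateSub S (2 * k + 1) (g k)).prod

/-- Restricted brickwork ansatz on the subsystem `S ⊆ {1,…,L}`: keeps exactly those
two-qubit gates whose support is contained in `S`. -/
noncomputable def brickSub {L : ℕ} (S : Finset (Fin L)) (d : ℕ) (gA gB : ℕ → ℕ → G2) :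
    Op ↥S :=
  ((List.range d).map fun i => sublayerBSub S (gB i) * sublayerASub S (gA i)).prod

/-- Site `s mod M` of the ring of `M` sites. -/
def finMod (M : ℕ) (hM : 0 < M) (s : ℕ) : Fin M := ⟨s % M, Nat.mod_lt _ hM⟩

/-- Periodic distance on the ring of `M` sites. -/
def pdist (M : ℕ) (j j' : Fin M) : ℕ :=
  min ((j : ℤ) - (j' : ℤ)).natAbs (M - ((j : ℤ) - (j' : ℤ)).natAbs)

open Classical in
/-- The domain `Λ_{L',j}` of periodic-distance radius `r = L'/2` around site `j`. -/
noncomputable def LambdaP (M : ℕ) (r : ℝ) (j : Fin M) : Finset (Fin M) :=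
  Finset.univ.filter fun j' => (pdist M j j' : ℝ) ≤ r

/-- Local term `h₀` (an operator on a window of `w` consecutive sites) translated so that
its window starts at site `s`, with periodic wrap-around, tensored with the identity. -/
noncomputable def embedWindow (M w : ℕ) (hM : 0 < M) (s : ℕ) (h0 : Op (Fin w)) :
    Op (Fin M) :=
  Matrix.of fun a b =>
    h0 (fun t => a (finMod M hM (s + t))) (fun t => b (finMod M hM (s + t))) *
      (if ∀ k : Fin M, (∀ t : Fin w, k ≠ finMod M hM (s + t)) → a k = b k then 1 else 0)

/-- Translation-invariant Hamiltonian with periodic boundary conditions on `M` sites,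
generated by the seed `h₀` acting on windows of `w` consecutive sites (range `w - 1`). -/
noncomputable def HPBC (M w : ℕ) (hM : 0 < M) (h0 : Op (Fin w)) : Op (Fin M) :=
  ∑ s ∈ Finset.range M, embedWindow M w hM s h0

/-- Restriction `H^{(L',j)}` of `HPBC`: the sum of those terms whose support is contained
in the periodic ball `Λ_{L',j}` of radius `r = L'/2` around `j`. -/
noncomputable def HPRest (M w : ℕ) (hM : 0 < M) (h0 : Op (Fin w)) (r : ℝ) (j : Fin M) :
    Op (Fin M) :=
  ∑ s ∈ (Finset.range M).filter
      (fun s => ∀ t : Fin w, finMod M hM (s + t) ∈ LambdaP M r j),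
    embedWindow M w hM s h0

/-- One layer of the translation-invariant PBC brickwork ansatz: the gate `gA` on all
pairs `(2k,2k+1)` is applied first, then the gate `gB` on all pairs `(2k+1,2k+2 mod M)`,
including the boundary pair. -/
noncomputable def layerPBC (M : ℕ) (hM : 0 < M) (gA gB : G2) : Op (Fin M) :=
  (((List.range (M / 2)).map fun k =>
      embedPair (finMod M hM (2 * k + 1)) (finMod M hM (2 * k + 2)) gB).prod) *
  (((List.range (M / 2)).map fun k =>
      embedPair (finMod M hM (2 * k)) (finMod M hM (2 * k + 1)) gA).prod)

/-- Depth-`d` translation-invariant PBC brickwork ansatz, with position-independent gates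
`gA i`, `gB i` within each layer `i`. -/
noncomputable def brickPBC (M : ℕ) (hM : 0 < M) (d : ℕ) (gA gB : ℕ → G2) : Op (Fin M) :=
  ((List.range d).map fun i => layerPBC M hM (gA i) (gB i)).prod


/-! ### Auxiliary lemmas for Proposition 1 -/

section Prop1Aux

variable {ι : Type*} [Fintype ι] [DecidableEq ι]

lemma pauli_complete (s t u v : Fin 2) :
    (1 : Matrix (Fin 2) (Fin 2) ℂ) s t * (1 : Matrix (Fin 2) (Fin 2) ℂ) u v
      + pX s t * pX u v + pY s t * pY u v + pZ s t * pZ u v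
      = if s = v ∧ t = u then 2 else 0 := by
  fin_cases s <;> fin_cases t <;> fin_cases u <;> fin_cases v <;>
    simp [pX, pY, pZ, Matrix.one_apply, Complex.ext_iff] <;> norm_num

lemma pauli_conjTranspose_mul : ∀ O ∈ [pX, pY, pZ], Oᴴ * O = 1 := by
  intro O hO
  fin_cases hO <;>
  · ext i k
    fin_cases i <;> fin_cases k <;>
      simp [pX, pY, pZ, Matrix.mul_apply, Fin.sum_univ_two, Matrix.one_apply,
        Matrix.conjTranspose_apply]

lemma pauli_mul_conjTranspose : ∀ O ∈ [pX, pY, pZ], O * Oᴴ = 1 := by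
  intro O hO
  fin_cases hO <;>
  · ext i k
    fin_cases i <;> fin_cases k <;>
      simp [pX, pY, pZ, Matrix.mul_apply, Fin.sum_univ_two, Matrix.one_apply,
        Matrix.conjTranspose_apply]

lemma embedAt_one (j : ι) : embedAt j (1 : Matrix (Fin 2) (Fin 2) ℂ) = 1 := by
  ext a b
  simp only [embedAt, Matrix.of_apply, Matrix.one_apply]
  by_cases h : a = b
  · subst h; simp
  · have h2 : ¬ (a j = b j ∧ ∀ k, k ≠ j → a k = b k) := by
      intro ⟨h1, h2⟩
      exact h (funext fun k => by
        by_cases hk : k = j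
        · rw [hk]; exact h1
        · exact h2 k hk)
    rw [if_neg h]
    by_cases hj : a j = b j
    · have : ¬ ∀ k, k ≠ j → a k = b k := fun hc => h2 ⟨hj, hc⟩
      simp [hj, this]
    · simp [hj]

lemma sum_update (j : ι) (a : ι → Fin 2) (f : (ι → Fin 2) → ℂ)
    (hf : ∀ c, ¬(∀ k, k ≠ j → a k = c k) → f c = 0) :
    ∑ c, f c = ∑ s : Fin 2, f (Function.update a j s) := by
  classical
  rw [← Equiv.sum_comp (Equiv.funSplitAt j (Fin 2)).symm f, Fintype.sum_prod_type]
  refine Finset.sum_congr rfl fun s _ => ?_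
  rw [Finset.sum_eq_single (fun k : {k // k ≠ j} => a k)]
  · have : (Equiv.funSplitAt j (Fin 2)).symm (s, fun k => a k.1) = Function.update a j s := by
      funext k
      by_cases hk : k = j <;> simp [Equiv.funSplitAt, Equiv.piSplitAt, Function.update, hk]
    rw [this]
  · intro g _ hg
    refine hf _ fun hc => hg (funext fun k => ?_)
    have := hc k k.2
    simpa [Equiv.funSplitAt, Equiv.piSplitAt, k.2] using this.symm
  · intro h; exact absurd (Finset.mem_univ _) h

lemma embedAt_mul (j : ι) (A B : Matrix (Fin 2) (Fin 2) ℂ) :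
    embedAt j A * embedAt j B = embedAt j (A * B) := by
  ext a b
  rw [Matrix.mul_apply]
  rw [sum_update j a _ (fun c hc => by simp [embedAt, hc])]
  simp only [embedAt, Matrix.of_apply, Matrix.mul_apply, Function.update_self]
  by_cases h : ∀ k, k ≠ j → a k = b k
  · have h1 : ∀ s : Fin 2, (∀ k, k ≠ j → a k = Function.update a j s k) := by
      intro s k hk; simp [Function.update_of_ne hk]
    have h2 : ∀ s : Fin 2, (∀ k, k ≠ j → Function.update a j s k = b k) := by
      intro s k hk; simp [Function.update_of_ne hk, h k hk]
    simp only [if_pos h, if_pos (h1 _), if_pos (h2 _)]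
    rw [Finset.sum_mul]
    simp [Fin.sum_univ_two]
  · have h2 : ∀ s : Fin 2, ¬(∀ k, k ≠ j → Function.update a j s k = b k) := by
      intro s hc
      exact h fun k hk => by simpa [Function.update_of_ne hk] using hc k hk
    simp [if_neg h, if_neg (h2 _)]

lemma embedAt_conjTranspose (j : ι) (A : Matrix (Fin 2) (Fin 2) ℂ) :
    (embedAt j A)ᴴ = embedAt j Aᴴ := by
  ext a b
  simp only [embedAt, Matrix.conjTranspose_apply, Matrix.of_apply, map_mul]
  have hsym : (∀ k, k ≠ j → b k = a k) ↔ (∀ k, k ≠ j → a k = b k) :=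
    ⟨fun h k hk => (h k hk).symm, fun h k hk => (h k hk).symm⟩
  by_cases h : ∀ k, k ≠ j → a k = b k
  · rw [if_pos (hsym.mpr h), if_pos h]; simp
  · rw [if_neg (fun hc => h (hsym.mp hc)), if_neg h]; simp

lemma embedAt_mem_unitaryGroup (j : ι) (O : Matrix (Fin 2) (Fin 2) ℂ)
    (hO : O * Oᴴ = 1) : embedAt j O ∈ Matrix.unitaryGroup (ι → Fin 2) ℂ := by
  rw [Matrix.mem_unitaryGroup_iff, Matrix.star_eq_conjTranspose, embedAt_conjTranspose,
    embedAt_mul, hO, embedAt_one]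

lemma if_helper (A B C : Prop) [Decidable A] [Decidable B] [Decidable C] :
    (if A ∧ B ∧ C then (2:ℂ)⁻¹ else 0)
      = 4⁻¹ * ((if A then 2 else 0) * ((if B then 1 else 0) * (if C then 1 else 0))) := by
  by_cases hA : A <;> by_cases hB : B <;> by_cases hC : C <;> simp [hA, hB, hC] <;> norm_num

/-- Decomposition of the site-`j` Bell projector into Paulis. -/
lemma PiProj_decomp (j : ι) :
    PiProj j = (4⁻¹ : ℂ) •
      (embedAt j 1 ⊗ₖ (embedAt j 1)ᵀ + embedAt j pX ⊗ₖ (embedAt j pX)ᵀ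
        + embedAt j pY ⊗ₖ (embedAt j pY)ᵀ + embedAt j pZ ⊗ₖ (embedAt j pZ)ᵀ) := by
  ext p q
  simp only [PiProj, Matrix.of_apply, Matrix.smul_apply, Matrix.add_apply,
    Matrix.kroneckerMap_apply, Matrix.transpose_apply, embedAt, smul_eq_mul]
  have key : ∀ O : Matrix (Fin 2) (Fin 2) ℂ,
      (O (p.1 j) (q.1 j) * if ∀ k, k ≠ j → p.1 k = q.1 k then 1 else 0) *
        (O (q.2 j) (p.2 j) * if ∀ k, k ≠ j → q.2 k = p.2 k then 1 else 0)
      = O (p.1 j) (q.1 j) * O (q.2 j) (p.2 j) *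
          ((if ∀ k, k ≠ j → p.1 k = q.1 k then 1 else 0) *
            (if ∀ k, k ≠ j → q.2 k = p.2 k then 1 else 0)) := fun O => by ring
  rw [key, key, key, key, ← add_mul, ← add_mul, ← add_mul, pauli_complete]
  have hsym : (∀ k, k ≠ j → q.2 k = p.2 k) ↔ (∀ k, k ≠ j → p.2 k = q.2 k) :=
    ⟨fun h k hk => (h k hk).symm, fun h k hk => (h k hk).symm⟩
  have hsplit : (p.1 j = p.2 j ∧ q.1 j = q.2 j ∧ ∀ k, k ≠ j → p.1 k = q.1 k ∧ p.2 k = q.2 k)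
      ↔ ((p.1 j = p.2 j ∧ q.1 j = q.2 j) ∧ (∀ k, k ≠ j → p.1 k = q.1 k)
          ∧ (∀ k, k ≠ j → p.2 k = q.2 k)) := by
    constructor
    · rintro ⟨h1, h2, h3⟩
      exact ⟨⟨h1, h2⟩, fun k hk => (h3 k hk).1, fun k hk => (h3 k hk).2⟩
    · rintro ⟨⟨h1, h2⟩, h3, h4⟩
      exact ⟨h1, h2, fun k hk => ⟨h3 k hk, h4 k hk⟩⟩
  rw [if_congr hsplit rfl rfl,
    show (if ∀ k, k ≠ j → q.2 k = p.2 k then (1:ℂ) else 0)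
        = (if ∀ k, k ≠ j → p.2 k = q.2 k then (1:ℂ) else 0) from if_congr hsym rfl rfl]
  exact if_helper _ _ _

lemma hr_aux : (((Real.sqrt (2 ^ Fintype.card ι) : ℝ) : ℂ))⁻¹ *
    ((Real.sqrt (2 ^ Fintype.card ι) : ℝ) : ℂ)⁻¹ = ((2:ℂ) ^ Fintype.card ι)⁻¹ := by
  rw [← mul_inv, ← Complex.ofReal_mul, Real.mul_self_sqrt (by positivity)]
  push_cast
  ring

lemma kron_trace_bell (A B : Op ι) :
    ((A ⊗ₖ B) * bellProj ι).trace = ((2:ℂ) ^ Fintype.card ι)⁻¹ * (A * Bᵀ).trace := by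
  set r : ℂ := ((Real.sqrt (2 ^ Fintype.card ι) : ℝ) : ℂ)⁻¹ with hr
  have h1 : ∀ p : (ι → Fin 2) × (ι → Fin 2),
      (∑ q, (A ⊗ₖ B) p q * bell ι q) = r * (A * Bᵀ) p.1 p.2 := by
    intro p
    simp only [bell, Matrix.kroneckerMap_apply, Fintype.sum_prod_type, mul_ite, mul_zero,
      Finset.sum_ite_eq', Finset.sum_ite_eq, Finset.mem_univ, if_true, Matrix.mul_apply,
      Matrix.transpose_apply, Finset.mul_sum]
    exact Finset.sum_congr rfl fun y _ => by ring
  calc ((A ⊗ₖ B) * bellProj ι).trace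
      = ∑ p, (∑ q, (A ⊗ₖ B) p q * bell ι q) * star (bell ι p) := by
        simp only [Matrix.trace, Matrix.diag, Matrix.mul_apply, bellProj, Matrix.of_apply,
          Finset.sum_mul]
        exact Finset.sum_congr rfl fun p _ => Finset.sum_congr rfl fun q _ => by ring
    _ = ∑ p : (ι → Fin 2) × (ι → Fin 2), r * (A * Bᵀ) p.1 p.2 * star (bell ι p) := by
        exact Finset.sum_congr rfl fun p _ => by rw [h1]
    _ = ∑ x, r * (A * Bᵀ) x x * star r := by
        simp only [bell, Fintype.sum_prod_type, apply_ite (star : ℂ → ℂ), star_zero, mul_ite,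
          mul_zero, Finset.sum_ite_eq', Finset.sum_ite_eq, Finset.mem_univ, if_true]
        rfl
    _ = ((2:ℂ) ^ Fintype.card ι)⁻¹ * (A * Bᵀ).trace := by
        have hstar : star r = r := by
          rw [hr]; simp [Complex.star_def, Complex.conj_ofReal]
        simp only [hstar, Matrix.trace, Matrix.diag, Finset.mul_sum]
        refine Finset.sum_congr rfl fun x _ => ?_
        rw [← hr_aux, ← hr]
        ring

lemma kron_conjTranspose (A B : Op ι) : (A ⊗ₖ B)ᴴ = Aᴴ ⊗ₖ Bᴴ := by
  ext p q
  simp only [Matrix.conjTranspose_apply, Matrix.kroneckerMap_apply, star_mul']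
  try ring

lemma conjMat_transpose (V : Op ι) : (conjMat V)ᵀ = Vᴴ := by
  ext a b
  simp [conjMat, Matrix.conjTranspose_apply]

lemma conjMat_conjTranspose_transpose (V : Op ι) : ((conjMat V)ᴴ)ᵀ = V := by
  ext a b
  simp [conjMat, Matrix.conjTranspose_apply]

lemma sandwich_transpose (E V : Op ι) : ((conjMat V)ᴴ * Eᵀ * conjMat V)ᵀ = Vᴴ * E * V := by
  rw [Matrix.transpose_mul, Matrix.transpose_mul, Matrix.transpose_transpose,
    conjMat_transpose, conjMat_conjTranspose_transpose, ← Matrix.mul_assoc]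

/-- The key single-Pauli trace identity. -/
lemma trace_kron_rho (j : ι) (U V : Op ι) (O : Matrix (Fin 2) (Fin 2) ℂ) :
    ((embedAt j O ⊗ₖ (embedAt j O)ᵀ) * rho U V).trace
      = ((2:ℂ) ^ Fintype.card ι)⁻¹ *
          ((Uᴴ * embedAt j O * U) * (Vᴴ * embedAt j O * V)).trace := by
  set E := embedAt j O
  set K := U ⊗ₖ conjMat V with hK
  have step1 : ((E ⊗ₖ Eᵀ) * rho U V).trace
      = ((Kᴴ * (E ⊗ₖ Eᵀ) * K) * bellProj ι).trace := by
    rw [rho, ← hK]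
    simp only [← Matrix.mul_assoc]
    rw [Matrix.trace_mul_comm]
    simp only [← Matrix.mul_assoc]
  have step2 : Kᴴ * (E ⊗ₖ Eᵀ) * K
      = (Uᴴ * E * U) ⊗ₖ ((conjMat V)ᴴ * Eᵀ * conjMat V) := by
    rw [hK, kron_conjTranspose, Matrix.mul_kronecker_mul, Matrix.mul_kronecker_mul]
  rw [step1, step2, kron_trace_bell, sandwich_transpose]

/-- The trace formula: local cost trace as a sum over Paulis. -/
lemma trace_PiProj_rho (j : ι) (U V : Op ι) :
    (PiProj j * rho U V).trace = (4⁻¹ : ℂ) * (((2:ℂ) ^ Fintype.card ι)⁻¹ *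
      (((Uᴴ * embedAt j 1 * U) * (Vᴴ * embedAt j 1 * V)).trace
        + ((Uᴴ * embedAt j pX * U) * (Vᴴ * embedAt j pX * V)).trace
        + ((Uᴴ * embedAt j pY * U) * (Vᴴ * embedAt j pY * V)).trace
        + ((Uᴴ * embedAt j pZ * U) * (Vᴴ * embedAt j pZ * V)).trace)) := by
  rw [PiProj_decomp j, Matrix.smul_mul, Matrix.trace_smul, Matrix.add_mul, Matrix.add_mul,
    Matrix.add_mul, Matrix.trace_add, Matrix.trace_add, Matrix.trace_add,
    trace_kron_rho, trace_kron_rho, trace_kron_rho, trace_kron_rho]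
  simp only [smul_eq_mul]
  ring

lemma timeEvol_conjTranspose_mul (τ : ℝ) (H : Op ι) (hH : H.IsHermitian) :
    (timeEvol τ H)ᴴ * timeEvol τ H = 1 := by
  have h2 : ((-(Complex.I * (τ : ℂ))) • H)ᴴ = -((-(Complex.I * (τ : ℂ))) • H) := by
    rw [Matrix.conjTranspose_smul, hH.eq, neg_smul, neg_neg]
    congr 1
    simp [Complex.ext_iff]
  have h3 := Matrix.exp_add_of_commute (-(-(Complex.I * (τ : ℂ)) • H))
    ((-(Complex.I * (τ : ℂ))) • H) (Commute.neg_left (Commute.refl _))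
  rw [neg_add_cancel, NormedSpace.exp_zero] at h3
  rw [timeEvol, ← Matrix.exp_conjTranspose, h2]
  exact h3.symm

lemma coord_le_norm {n : Type*} [Fintype n] (v : EuclideanSpace ℂ n) (x : n) :
    ‖v x‖ ≤ ‖v‖ := by
  rw [EuclideanSpace.norm_eq,
    show ‖v x‖ = Real.sqrt (‖v x‖ ^ 2) from (Real.sqrt_sq (norm_nonneg _)).symm]
  refine Real.sqrt_le_sqrt ?_
  exact Finset.single_le_sum (f := fun i => ‖v i‖ ^ 2) (fun i _ => by positivity)
    (Finset.mem_univ x)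

lemma entry_le_opNorm {n : Type*} [Fintype n] [DecidableEq n] (A : Matrix n n ℂ) (x y : n) :
    ‖A x y‖ ≤ opNorm A := by
  set f := Matrix.toEuclideanCLM (𝕜 := ℂ) A
  have h1 : f (EuclideanSpace.single y 1) = (WithLp.equiv 2 _).symm (A *ᵥ Pi.single y 1) := by
    rfl
  have h2 : ((f (EuclideanSpace.single y 1)) : EuclideanSpace ℂ n) x = A x y := by
    rw [h1]
    simp [Matrix.mulVec_single]
  calc ‖A x y‖ = ‖(f (EuclideanSpace.single y 1)) x‖ := by rw [h2]
    _ ≤ ‖f (EuclideanSpace.single y 1)‖ := coord_le_norm _ _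
    _ ≤ ‖f‖ * ‖EuclideanSpace.single y (1:ℂ)‖ := f.le_opNorm _
    _ = opNorm A := by rw [EuclideanSpace.norm_single, norm_one, mul_one, opNorm]

set_option synthInstance.maxHeartbeats 1000000 in
lemma opNorm_unitary {n : Type*} [Fintype n] [DecidableEq n] [Nonempty n]
    (M : Matrix n n ℂ) (hM : M ∈ Matrix.unitaryGroup n ℂ) : opNorm M = 1 := by
  haveI : Nontrivial (EuclideanSpace ℂ n) := by
    refine nontrivial_of_ne (EuclideanSpace.single (Classical.arbitrary n) (1:ℂ)) 0 fun h => ?_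
    have := congr_arg norm h
    rw [EuclideanSpace.norm_single] at this
    simpa using this
  haveI : Nontrivial (EuclideanSpace ℂ n →L[ℂ] EuclideanSpace ℂ n) := by
    obtain ⟨x, hx⟩ := exists_ne (0 : EuclideanSpace ℂ n)
    exact nontrivial_of_ne 1 0 fun h => hx (by simpa using DFunLike.congr_fun h x)
  have hmem : Matrix.toEuclideanCLM (𝕜 := ℂ) M ∈
      unitary (EuclideanSpace ℂ n →L[ℂ] EuclideanSpace ℂ n) := by
    obtain ⟨h1, h2⟩ := hM
    constructor
    · rw [← map_star, ← map_mul, h1, map_one]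
    · rw [← map_star, ← map_mul, h2, map_one]
  exact CStarRing.norm_of_mem_unitary hmem

lemma opNorm_mul_le {n : Type*} [Fintype n] [DecidableEq n] (A B : Matrix n n ℂ) :
    opNorm (A * B) ≤ opNorm A * opNorm B := by
  rw [opNorm, map_mul]
  exact norm_mul_le _ _

lemma trace_mul_unitary_re_le (D M : Op ι) (hM : M ∈ Matrix.unitaryGroup (ι → Fin 2) ℂ) :
    ((D * M).trace).re ≤ (2:ℝ) ^ Fintype.card ι * opNorm D := by
  have hcard : (Fintype.card (ι → Fin 2) : ℝ) = (2:ℝ) ^ Fintype.card ι := by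
    rw [Fintype.card_fun]
    push_cast [Fintype.card_fin]
    ring
  calc ((D * M).trace).re ≤ |((D * M).trace).re| := le_abs_self _
    _ ≤ ‖(D * M).trace‖ := Complex.abs_re_le_norm _
    _ = ‖∑ x, (D * M) x x‖ := rfl
    _ ≤ ∑ x : ι → Fin 2, ‖(D * M) x x‖ := by
        exact norm_sum_le _ _
    _ ≤ ∑ x : ι → Fin 2, opNorm D := by
        refine Finset.sum_le_sum fun x _ => ?_
        calc ‖(D * M) x x‖ ≤ opNorm (D * M) := entry_le_opNorm _ _ _
          _ ≤ opNorm D * opNorm M := opNorm_mul_le _ _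
          _ = opNorm D := by rw [opNorm_unitary M hM, mul_one]
    _ = (2:ℝ) ^ Fintype.card ι * opNorm D := by
        rw [Finset.sum_const, Finset.card_univ, nsmul_eq_mul, hcard]

end Prop1Aux
/-- **Proposition 1.** Let `H^{(L)} = Σ_X h_X` be a Hamiltonian on `L` qubits
(Hermitian local terms `h X` acting nontrivially only on `X`), let `L' ≤ L`, `j ∈ Λ`, and set
`U^{(L)} = exp(−iH^{(L)}τ)` and `U^{(L',j)} = exp(−iH^{(L',j)}τ) ⊗ I` where `H^{(L',j)}` is the
sum of the terms supported in `Λ_{L',j}`. If for each Pauli `O ∈ {X,Y,Z}` at site `j` we have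
`‖U^{(L)†} O_j U^{(L)} − U^{(L',j)†} O_j U^{(L',j)}‖ ≤ ε_LR`, then for every `L`-qubit unitary
`V`, `C_LHST^{(j)}(U^{(L)}, V) ≤ C_LHST^{(j)}(U^{(L',j)}, V) + (3/4) ε_LR`. -/
theorem restricted_hamiltonian_cost_bound (L L' : ℕ) (hL' : L' ≤ L) (τ : ℝ) (hτ : 0 ≤ τ)
    (j : Fin L) (h : Finset (Fin L) → Op (Fin L))
    (hherm : ∀ X, (h X).IsHermitian) (hacts : ∀ X, ActsOn (h X) X)
    (εLR : ℝ)
    (hLR : ∀ O ∈ [pX, pY, pZ],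
      opNorm ((timeEvol τ (∑ X : Finset (Fin L), h X))ᴴ * embedAt j O *
            timeEvol τ (∑ X : Finset (Fin L), h X)
          - (timeEvol τ (∑ X ∈ Finset.univ.filter (· ⊆ LambdaF L L' j), h X))ᴴ *
              embedAt j O *
              timeEvol τ (∑ X ∈ Finset.univ.filter (· ⊆ LambdaF L L' j), h X)) ≤ εLR)
    (V : Op (Fin L)) (hV : V ∈ Matrix.unitaryGroup (Fin L → Fin 2) ℂ) :
    CLHSTj j (timeEvol τ (∑ X : Finset (Fin L), h X)) V ≤
      CLHSTj j (timeEvol τ (∑ X ∈ Finset.univ.filter (· ⊆ LambdaF L L' j), h X)) V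
        + 3 / 4 * εLR := by
  classical
  set H1 : Op (Fin L) := ∑ X : Finset (Fin L), h X with hH1def
  set H2 : Op (Fin L) := ∑ X ∈ Finset.univ.filter (· ⊆ LambdaF L L' j), h X with hH2def
  have hH1 : H1.IsHermitian := by
    show H1ᴴ = H1
    rw [hH1def, Matrix.conjTranspose_sum]
    exact Finset.sum_congr rfl fun X _ => hherm X
  have hH2 : H2.IsHermitian := by
    show H2ᴴ = H2
    rw [hH2def, Matrix.conjTranspose_sum]
    exact Finset.sum_congr rfl fun X _ => hherm X
  set U1 : Op (Fin L) := timeEvol τ H1 with hU1def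
  set U2 : Op (Fin L) := timeEvol τ H2 with hU2def
  have hU1 : U1ᴴ * U1 = 1 := timeEvol_conjTranspose_mul τ H1 hH1
  have hU2 : U2ᴴ * U2 = 1 := timeEvol_conjTranspose_mul τ H2 hH2
  have hone : ∀ U : Op (Fin L), Uᴴ * U = 1 → Uᴴ * embedAt j 1 * U = 1 := fun U hU => by
    rw [embedAt_one, Matrix.mul_one, hU]
  simp only [CLHSTj]
  rw [trace_PiProj_rho, trace_PiProj_rho, hone U1 hU1, hone U2 hU2]
  set n : ℕ := Fintype.card (Fin L) with hn
  set c : ℝ := 4⁻¹ * ((2:ℝ) ^ n)⁻¹ with hc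
  have hcpos : (0:ℝ) ≤ c := by rw [hc]; positivity
  have hre : ∀ z : ℂ, ((4⁻¹ : ℂ) * (((2:ℂ) ^ n)⁻¹ * z)).re = c * z.re := by
    intro z
    rw [show (4⁻¹ : ℂ) * (((2:ℂ) ^ n)⁻¹ * z) = ((c:ℝ):ℂ) * z by rw [hc]; push_cast; ring,
      Complex.re_ofReal_mul]
  rw [hre, hre]
  -- unitarity of the conjugated Paulis
  have hB : ∀ O ∈ [pX, pY, pZ], Vᴴ * embedAt j O * V ∈ Matrix.unitaryGroup (Fin L → Fin 2) ℂ := by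
    intro O hO
    have hE := embedAt_mem_unitaryGroup j O (pauli_mul_conjTranspose O hO)
    rw [show Vᴴ = star V from rfl]
    exact mul_mem (mul_mem (Unitary.star_mem hV) hE) hV
  have hgen : ∀ O ∈ [pX, pY, pZ],
      (((U2ᴴ * embedAt j O * U2) * (Vᴴ * embedAt j O * V)).trace
        - ((U1ᴴ * embedAt j O * U1) * (Vᴴ * embedAt j O * V)).trace).re
      ≤ (2:ℝ) ^ n * εLR := by
    intro O hO
    rw [← Matrix.trace_sub, ← Matrix.sub_mul]
    refine (trace_mul_unitary_re_le _ _ (hB O hO)).trans ?_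
    refine mul_le_mul_of_nonneg_left ?_ (by positivity)
    have hrev : opNorm (U2ᴴ * embedAt j O * U2 - U1ᴴ * embedAt j O * U1)
        = opNorm (U1ᴴ * embedAt j O * U1 - U2ᴴ * embedAt j O * U2) := by
      rw [opNorm, opNorm, map_sub, map_sub, norm_sub_rev]
    rw [hrev]
    exact hLR O hO
  have hXb := hgen pX (by simp)
  have hYb := hgen pY (by simp)
  have hZb := hgen pZ (by simp)
  set T0 : ℂ := ((1 : Op (Fin L)) * (Vᴴ * embedAt j 1 * V)).trace with hT0
  set aX : ℂ := ((U1ᴴ * embedAt j pX * U1) * (Vᴴ * embedAt j pX * V)).trace with haX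
  set aY : ℂ := ((U1ᴴ * embedAt j pY * U1) * (Vᴴ * embedAt j pY * V)).trace with haY
  set aZ : ℂ := ((U1ᴴ * embedAt j pZ * U1) * (Vᴴ * embedAt j pZ * V)).trace with haZ
  set bX : ℂ := ((U2ᴴ * embedAt j pX * U2) * (Vᴴ * embedAt j pX * V)).trace with hbX
  set bY : ℂ := ((U2ᴴ * embedAt j pY * U2) * (Vᴴ * embedAt j pY * V)).trace with hbY
  set bZ : ℂ := ((U2ᴴ * embedAt j pZ * U2) * (Vᴴ * embedAt j pZ * V)).trace with hbZ
  simp only [Complex.sub_re, Complex.add_re] at hXb hYb hZb ⊢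
  have hsum : (bX.re + bY.re + bZ.re) - (aX.re + aY.re + aZ.re)
      ≤ 3 * ((2:ℝ) ^ n * εLR) := by linarith
  have hmul := mul_le_mul_of_nonneg_left hsum hcpos
  have hval : c * (3 * ((2:ℝ) ^ n * εLR)) = 3 / 4 * εLR := by
    rw [hc]
    field_simp
  rw [hval] at hmul
  nlinarith [hmul]

end LVQC
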